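/- Let ρ ∈ (-1,1) and define p(x,y) = 1/2 - arctan(√((1+ρ)/(1-ρ)) · (y-x)/(y+x)) / (2·arctan(√((1+ρ)/(1-ρ)))) for x,y > 0. Then p satisfies the PDE (1/2)∂²p/∂x² + (1/2)∂²p/∂y² + ρ ∂²p/∂x∂y = 0 on the open positive quadrant. -/

import Mathlib

/-!
Up to the affine change `p = 1/2 - θ / (2 arctan c)`, `p` is the angle
`θ = arctan (c (y - x) / (y + x))`. A direct computation gives
`½ θ_xx + ½ θ_yy + ρ θ_xy = 2c (y² - x²) (1 - c² + ρ (1 + c²)) / D²` with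
`D = (y + x)² + c² (y - x)²`, and the choice `c² = (1 + ρ) / (1 - ρ)` is exactly
`ρ (1 + c²) = c² - 1`, which makes the bracket vanish.
-/

open Real Filter Set

noncomputable def corrLaplacian (ρ : ℝ) (f : ℝ → ℝ → ℝ) (x y : ℝ) : ℝ :=
  1 / 2 * deriv (fun s => deriv (fun r => f r y) s) x
    + 1 / 2 * deriv (fun s => deriv (fun r => f x r) s) y
    + ρ * deriv (fun s => deriv (fun r => f r s) x) y

theorem corrLaplacian_const_sub_div (ρ a K : ℝ) (f : ℝ → ℝ → ℝ) (x y : ℝ) :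
    corrLaplacian ρ (fun x y => a - f x y / K) x y = -corrLaplacian ρ f x y / K := by
  simp only [corrLaplacian, deriv_const_sub, deriv_div_const, deriv.fun_neg]
  ring

noncomputable def arctanRatio (c x y : ℝ) : ℝ := arctan (c * ((y - x) / (y + x)))

/-- `(y + x)² (1 + (c (y - x) / (y + x))²)`, the denominator of the partial derivatives of
`arctanRatio c`. -/
def arctanRatioDenom (c x y : ℝ) : ℝ := (y + x) ^ 2 + c ^ 2 * (y - x) ^ 2

theorem hasDerivAt_arctanRatioDenom_fst (c x y : ℝ) :
    HasDerivAt (fun s => arctanRatioDenom c s y) (2 * (y + x) - 2 * c ^ 2 * (y - x)) x := by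
  refine ((((hasDerivAt_id' x).const_add y).pow 2).add
    ((((hasDerivAt_id' x).const_sub y).pow 2).const_mul (c ^ 2))).congr_deriv ?_
  push_cast
  ring

theorem hasDerivAt_arctanRatioDenom_snd (c x y : ℝ) :
    HasDerivAt (fun s => arctanRatioDenom c x s) (2 * (y + x) + 2 * c ^ 2 * (y - x)) y := by
  refine ((((hasDerivAt_id' y).add_const x).pow 2).add
    ((((hasDerivAt_id' y).sub_const x).pow 2).const_mul (c ^ 2))).congr_deriv ?_
  push_cast
  ring

section arctanRatio

variable {c x y : ℝ}

theorem arctanRatioDenom_pos (h : y + x ≠ 0) : 0 < arctanRatioDenom c x y := by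
  unfold arctanRatioDenom
  positivity

theorem hasDerivAt_arctanRatio_fst (h : y + x ≠ 0) :
    HasDerivAt (fun r => arctanRatio c r y) (-(2 * c * y) / arctanRatioDenom c x y) x := by
  have hq := ((((hasDerivAt_id' x).const_sub y).fun_div ((hasDerivAt_id' x).const_add y) h)
    ).const_mul c
  refine ((hasDerivAt_arctan _).comp x hq).congr_deriv ?_
  have hD := (arctanRatioDenom_pos (c := c) h).ne'
  rw [arctanRatioDenom] at hD ⊢
  field_simp
  ring

theorem hasDerivAt_arctanRatio_snd (h : y + x ≠ 0) :
    HasDerivAt (fun r => arctanRatio c x r) (2 * c * x / arctanRatioDenom c x y) y := by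
  have hq := ((((hasDerivAt_id' y).sub_const x).fun_div ((hasDerivAt_id' y).add_const x) h)
    ).const_mul c
  refine ((hasDerivAt_arctan _).comp y hq).congr_deriv ?_
  have hD := (arctanRatioDenom_pos (c := c) h).ne'
  rw [arctanRatioDenom] at hD ⊢
  field_simp
  ring

theorem deriv_deriv_arctanRatio_fst (h : y + x ≠ 0) :
    deriv (fun s => deriv (fun r => arctanRatio c r y) s) x =
      2 * c * y * (2 * (y + x) - 2 * c ^ 2 * (y - x)) / arctanRatioDenom c x y ^ 2 := by
  have hnear : ∀ᶠ s in nhds x, y + s ≠ 0 :=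
    (continuous_const.add continuous_id).continuousAt.eventually_ne h
  have heq : (fun s => deriv (fun r => arctanRatio c r y) s) =ᶠ[nhds x]
      fun s => -(2 * c * y) / arctanRatioDenom c s y :=
    hnear.mono fun s hs => (hasDerivAt_arctanRatio_fst hs).deriv
  rw [heq.deriv_eq, ((hasDerivAt_const x (-(2 * c * y))).fun_div
    (hasDerivAt_arctanRatioDenom_fst c x y) (arctanRatioDenom_pos h).ne').deriv]
  ring

theorem deriv_deriv_arctanRatio_snd (h : y + x ≠ 0) :
    deriv (fun s => deriv (fun r => arctanRatio c x r) s) y =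
      -(2 * c * x * (2 * (y + x) + 2 * c ^ 2 * (y - x))) / arctanRatioDenom c x y ^ 2 := by
  have hnear : ∀ᶠ s in nhds y, s + x ≠ 0 :=
    (continuous_id.add continuous_const).continuousAt.eventually_ne h
  have heq : (fun s => deriv (fun r => arctanRatio c x r) s) =ᶠ[nhds y]
      fun s => 2 * c * x / arctanRatioDenom c x s :=
    hnear.mono fun s hs => (hasDerivAt_arctanRatio_snd hs).deriv
  rw [heq.deriv_eq, ((hasDerivAt_const y (2 * c * x)).fun_div
    (hasDerivAt_arctanRatioDenom_snd c x y) (arctanRatioDenom_pos h).ne').deriv]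
  ring

theorem deriv_deriv_arctanRatio_fst_snd (h : y + x ≠ 0) :
    deriv (fun s => deriv (fun r => arctanRatio c r s) x) y =
      (-(2 * c) * arctanRatioDenom c x y + 2 * c * y * (2 * (y + x) + 2 * c ^ 2 * (y - x)))
        / arctanRatioDenom c x y ^ 2 := by
  have hnear : ∀ᶠ s in nhds y, s + x ≠ 0 :=
    (continuous_id.add continuous_const).continuousAt.eventually_ne h
  have heq : (fun s => deriv (fun r => arctanRatio c r s) x) =ᶠ[nhds y]
      fun s => -(2 * c * s) / arctanRatioDenom c x s :=
    hnear.mono fun s hs => (hasDerivAt_arctanRatio_fst hs).deriv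
  have hnum : HasDerivAt (fun s => -(2 * c * s)) (-(2 * c)) y := by
    simpa using ((hasDerivAt_id' y).const_mul (2 * c)).fun_neg
  rw [heq.deriv_eq, (hnum.fun_div (hasDerivAt_arctanRatioDenom_snd c x y)
    (arctanRatioDenom_pos h).ne').deriv]
  ring

theorem corrLaplacian_arctanRatio_eq_zero {ρ : ℝ} (hρc : ρ * (1 + c ^ 2) = c ^ 2 - 1)
    (h : y + x ≠ 0) : corrLaplacian ρ (arctanRatio c) x y = 0 := by
  rw [corrLaplacian, deriv_deriv_arctanRatio_fst h, deriv_deriv_arctanRatio_snd h,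
    deriv_deriv_arctanRatio_fst_snd h]
  have hD := (arctanRatioDenom_pos (c := c) h).ne'
  field_simp
  unfold arctanRatioDenom
  linear_combination (2 * c * (y ^ 2 - x ^ 2)) * hρc

end arctanRatio

/-- For `ρ ∈ (-1,1)`, the function
`p(x,y) = 1/2 - arctan(√((1+ρ)/(1-ρ))·(y-x)/(y+x)) / (2 arctan(√((1+ρ)/(1-ρ))))`
satisfies `(1/2)∂²p/∂x² + (1/2)∂²p/∂y² + ρ ∂²p/∂x∂y = 0` on the open positive
quadrant. -/
theorem stmt1 (ρ : ℝ) (hρ : ρ ∈ Ioo (-1 : ℝ) 1) (p : ℝ → ℝ → ℝ)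
    (hp : ∀ x y : ℝ, p x y =
      1 / 2 - arctan (Real.sqrt ((1 + ρ) / (1 - ρ)) * ((y - x) / (y + x)))
        / (2 * arctan (Real.sqrt ((1 + ρ) / (1 - ρ))))) :
    ∀ x y : ℝ, 0 < x → 0 < y →
      (1 / 2) * deriv (fun s => deriv (fun r => p r y) s) x
        + (1 / 2) * deriv (fun s => deriv (fun r => p x r) s) y
        + ρ * deriv (fun s => deriv (fun r => p r s) x) y = 0 := by
  intro x y hx hy
  set c := Real.sqrt ((1 + ρ) / (1 - ρ))
  have hp' : p = fun x y => 1 / 2 - arctanRatio c x y / (2 * arctan c) := funext₂ hp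
  have hρc : ρ * (1 + c ^ 2) = c ^ 2 - 1 := by
    have h1ρ : 1 - ρ ≠ 0 := by linarith [hρ.2]
    rw [Real.sq_sqrt (div_nonneg (by linarith [hρ.1]) (by linarith [hρ.2]))]
    field_simp
    ring
  change corrLaplacian ρ p x y = 0
  rw [hp', corrLaplacian_const_sub_div, corrLaplacian_arctanRatio_eq_zero hρc (by positivity),
    neg_zero, zero_div]
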